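/- arXiv:2208.06236 — 3 statements merged into one kernel-verified Lean document; each statement's English description precedes it below -/
import Mathlib

section
/- Let H be a Borel probability measure on ℝ, let n ≥ 1, and let ε > 0. Then there exist x, x' ∈ ℝⁿ differing in exactly one coordinate such that ∫_ℝ |F̂_x(t) − F̂_{x'}(t)| dH(t) ≥ 1/n − ε. Consequently, the base sensitivity of the weighted Wasserstein distance d_W^H equals 1/n. -/
/-!
Changing one coordinate of the sample changes one indicator in the empirical cdf, so
`|F̂_x - F̂_x'| ≤ 1/n` pointwise and hence `d_W^H ≤ 1/n`. Conversely, moving one sample point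
from `a` up to `b` makes the difference exactly `1/n` on `[a, b)`, so `d_W^H = H[a, b) / n`,
which approaches `1/n` as `[a, b)` exhausts `ℝ`.
-/

open MeasureTheory Filter

/-- Empirical cdf of a sample `x : Fin n → ℝ`. -/
noncomputable def ecdf {n : ℕ} (x : Fin n → ℝ) (t : ℝ) : ℝ :=
  (Finset.univ.filter (fun i => x i ≤ t)).card / n

/-- Weighted Wasserstein distance with base measure `H`. -/
noncomputable def dW (H : Measure ℝ) (F G : ℝ → ℝ) : ℝ :=
  ∫ t, |F t - G t| ∂H

open Set Topology

theorem tendsto_measure_Ico_neg_atTop (μ : Measure ℝ) :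
    Tendsto (fun r : ℝ => μ (Ico (-r) r)) atTop (𝓝 (μ univ)) := by
  have hmono : Monotone fun r : ℝ => Ico (-r) r := fun _ _ h => Ico_subset_Ico (neg_le_neg h) h
  have hunion : ⋃ r : ℝ, Ico (-r) r = univ := eq_univ_of_forall fun t =>
    mem_iUnion.2 ⟨|t| + 1, by constructor <;> linarith [neg_abs_le t, le_abs_self t]⟩
  rw [← hunion]
  exact tendsto_measure_iUnion_atTop hmono

theorem exists_lt_measureReal_Ico (μ : Measure ℝ) [IsProbabilityMeasure μ] {c : ℝ} (hc : c < 1) :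
    ∃ a b, a < b ∧ c < μ.real (Ico a b) := by
  have hlim : Tendsto (fun r : ℝ => μ.real (Ico (-r) r)) atTop (𝓝 1) := by
    have := tendsto_measure_Ico_neg_atTop μ
    rw [measure_univ] at this
    exact (ENNReal.tendsto_toReal ENNReal.one_ne_top).comp this
  obtain ⟨r, hr, hr0⟩ :=
    ((hlim.eventually (eventually_gt_nhds hc)).and (eventually_gt_atTop 0)).exists
  exact ⟨-r, r, by linarith, hr⟩

theorem hammingDist_update_of_ne {ι β : Type*} [Fintype ι] [DecidableEq ι] [DecidableEq β]
    (x : ι → β) (i : ι) {b : β} (hb : x i ≠ b) : hammingDist x (Function.update x i b) = 1 := by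
  rw [hammingDist, Finset.card_eq_one]
  refine ⟨i, Finset.ext fun j => ?_⟩
  by_cases hj : j = i
  · subst hj; simp [hb]
  · simp [hj]

section ecdf

variable {n : ℕ}

theorem ecdf_sub_ecdf (x y : Fin n → ℝ) (t : ℝ) :
    ecdf x t - ecdf y t =
      (∑ i, ((if x i ≤ t then 1 else 0) - (if y i ≤ t then 1 else 0) : ℝ)) / n := by
  simp [ecdf, Finset.sum_sub_distrib, sub_div]

theorem abs_ecdf_sub_ecdf_le (x y : Fin n → ℝ) (t : ℝ) :
    |ecdf x t - ecdf y t| ≤ hammingDist x y / n := by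
  rw [ecdf_sub_ecdf, abs_div, Nat.abs_cast]
  gcongr
  calc |∑ i, ((if x i ≤ t then 1 else 0) - (if y i ≤ t then 1 else 0) : ℝ)|
      ≤ ∑ i, |((if x i ≤ t then 1 else 0) - (if y i ≤ t then 1 else 0) : ℝ)| :=
        Finset.abs_sum_le_sum_abs _ _
    _ ≤ ∑ i, (if x i ≠ y i then 1 else 0 : ℝ) := by
        gcongr with i
        by_cases h : x i = y i
        · simp [h]
        · simp only [h, ne_eq, not_false_eq_true, if_true]; split_ifs <;> norm_num
    _ = hammingDist x y := by rw [Finset.sum_boole]; rfl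

theorem abs_ecdf_sub_ecdf_update (x : Fin n → ℝ) (i : Fin n) {b : ℝ} (hb : x i < b) (t : ℝ) :
    |ecdf x t - ecdf (Function.update x i b) t| =
      (Ico (x i) b).indicator (fun _ => (1 / n : ℝ)) t := by
  rw [ecdf_sub_ecdf, Finset.sum_eq_single i (fun j _ hj => by simp [hj]) (by simp)]
  by_cases hxt : x i ≤ t <;> by_cases hbt : b ≤ t
  · simp [hxt, hbt]
  · simp [hxt, hbt, not_le.1 hbt]
  · exact absurd (hb.le.trans hbt) hxt
  · simp [hxt, hbt]

variable (H : Measure ℝ)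

theorem dW_ecdf_update (x : Fin n → ℝ) (i : Fin n) {b : ℝ} (hb : x i < b) :
    dW H (ecdf x) (ecdf (Function.update x i b)) = H.real (Ico (x i) b) / n := by
  simp_rw [dW, abs_ecdf_sub_ecdf_update x i hb, integral_indicator_const _ measurableSet_Ico,
    smul_eq_mul, mul_one_div]

variable [IsProbabilityMeasure H]

theorem dW_ecdf_le_hammingDist (x y : Fin n → ℝ) :
    dW H (ecdf x) (ecdf y) ≤ hammingDist x y / n := by
  calc dW H (ecdf x) (ecdf y) ≤ ∫ _, (hammingDist x y / n : ℝ) ∂H :=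
        integral_mono_of_nonneg (.of_forall fun _ => abs_nonneg _) (integrable_const _)
          (.of_forall (abs_ecdf_sub_ecdf_le x y))
    _ = hammingDist x y / n := by simp

theorem exists_hammingDist_eq_one_lt_dW (hn : 0 < n) {ε : ℝ} (hε : 0 < ε) :
    ∃ x y : Fin n → ℝ, hammingDist x y = 1 ∧ 1 / n - ε < dW H (ecdf x) (ecdf y) := by
  have hn' : (0 : ℝ) < n := Nat.cast_pos.2 hn
  obtain ⟨a, b, hab, hH⟩ := exists_lt_measureReal_Ico H (c := 1 - n * ε) (by nlinarith)
  let x : Fin n → ℝ := fun _ => a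
  refine ⟨x, Function.update x ⟨0, hn⟩ b, hammingDist_update_of_ne x _ hab.ne, ?_⟩
  rw [dW_ecdf_update H x _ hab, lt_div_iff₀ hn', sub_mul, one_div_mul_cancel hn'.ne']
  linarith

end ecdf

theorem wasserstein_base_sensitivity_eq {n : ℕ} (hn : 1 ≤ n)
    (H : Measure ℝ) [IsProbabilityMeasure H] (ε : ℝ) (hε : 0 < ε) :
    (∃ x x' : Fin n → ℝ, hammingDist x x' = 1 ∧
      ∫ t, |ecdf x t - ecdf x' t| ∂H ≥ 1 / (n : ℝ) - ε) ∧
    sSup {d : ℝ | ∃ x x' : Fin n → ℝ, hammingDist x x' ≤ 1 ∧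
      d = dW H (ecdf x) (ecdf x')} = 1 / n := by
  refine ⟨?_, csSup_eq_of_forall_le_of_forall_lt_exists_gt ?_ ?_ ?_⟩
  · obtain ⟨x, x', hxx', hlt⟩ := exists_hammingDist_eq_one_lt_dW H hn hε
    exact ⟨x, x', hxx', hlt.le⟩
  · exact ⟨_, 0, 0, by simp, rfl⟩
  · rintro _ ⟨x, x', hxx', rfl⟩
    exact (dW_ecdf_le_hammingDist H x x').trans (by gcongr; exact_mod_cast hxx')
  · intro w hw
    obtain ⟨x, x', hxx', hlt⟩ := exists_hammingDist_eq_one_lt_dW H hn (sub_pos.2 hw)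
    exact ⟨_, ⟨x, x', hxx'.le, rfl⟩, by linarith⟩
end

section
/- Let n, m ≥ 1, let x, x' ∈ ℝⁿ with H(x,x') ≤ 1 and y, y' ∈ ℝᵐ with H(y,y') ≤ 1 (each sample changes in at most one coordinate). Then the two-sample Kolmogorov–Smirnov statistic satisfies |d_KS(F̂_x, F̂_y) − d_KS(F̂_{x'}, F̂_{y'})| ≤ 1/n + 1/m. -/
open Filter

/-- Kolmogorov–Smirnov distance. -/
noncomputable def dKS (F G : ℝ → ℝ) : ℝ := ⨆ t : ℝ, |F t - G t|

lemma ecdf_nonneg {n : ℕ} (x : Fin n → ℝ) (t : ℝ) : 0 ≤ ecdf x t := by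
  unfold ecdf; positivity

lemma ecdf_le_one {n : ℕ} (hn : 1 ≤ n) (x : Fin n → ℝ) (t : ℝ) : ecdf x t ≤ 1 := by
  unfold ecdf
  rw [div_le_one (by exact_mod_cast hn)]
  exact_mod_cast (Finset.card_filter_le _ _).trans (by simp)

lemma ecdf_diff_le {n : ℕ} (hn : 1 ≤ n) (x x' : Fin n → ℝ) (hx : hammingDist x x' ≤ 1)
    (t : ℝ) : |ecdf x t - ecdf x' t| ≤ 1 / n := by
  have key : ∀ (u v : Fin n → ℝ), hammingDist u v ≤ 1 →
      ((Finset.univ.filter (fun i => u i ≤ t)).card : ℝ) ≤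
      (Finset.univ.filter (fun i => v i ≤ t)).card + 1 := by
    intro u v huv
    have hsub : (Finset.univ.filter (fun i => u i ≤ t)) ⊆
        (Finset.univ.filter (fun i => v i ≤ t)) ∪ (Finset.univ.filter (fun i => u i ≠ v i)) := by
      intro i hi
      simp only [Finset.mem_filter, Finset.mem_union, Finset.mem_univ, true_and] at hi ⊢
      by_cases h : u i = v i
      · exact Or.inl (h ▸ hi)
      · exact Or.inr h
    have := (Finset.card_le_card hsub).trans (Finset.card_union_le _ _)
    have h2 : (Finset.univ.filter (fun i => u i ≠ v i)).card ≤ 1 := huv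
    push_cast
    exact_mod_cast this.trans (by omega)
  have h1 := key x x' hx
  have h2 := key x' x (by rwa [hammingDist_comm])
  have hn' : (0:ℝ) < n := by exact_mod_cast hn
  unfold ecdf
  rw [div_sub_div_same, abs_div, abs_of_nonneg hn'.le, div_le_div_iff₀ hn' hn', one_mul]
  have : |((Finset.univ.filter (fun i => x i ≤ t)).card : ℝ) - (Finset.univ.filter (fun i => x' i ≤ t)).card| ≤ 1 := by
    rw [abs_le]; constructor <;> linarith
  nlinarith [abs_nonneg (((Finset.univ.filter (fun i => x i ≤ t)).card : ℝ) - (Finset.univ.filter (fun i => x' i ≤ t)).card)]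
lemma dKS_bddAbove {n m : ℕ} (hn : 1 ≤ n) (hm : 1 ≤ m) (x : Fin n → ℝ) (y : Fin m → ℝ) :
    BddAbove (Set.range fun t => |ecdf x t - ecdf y t|) := by
  refine ⟨1, ?_⟩
  rintro _ ⟨t, rfl⟩
  rw [abs_sub_le_iff]
  constructor <;> nlinarith [ecdf_nonneg x t, ecdf_nonneg y t, ecdf_le_one hn x t, ecdf_le_one hm y t]

lemma dKS_le {n m : ℕ} (hn : 1 ≤ n) (hm : 1 ≤ m)
    (x x' : Fin n → ℝ) (y y' : Fin m → ℝ)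
    (hx : hammingDist x x' ≤ 1) (hy : hammingDist y y' ≤ 1) :
    dKS (ecdf x) (ecdf y) ≤ dKS (ecdf x') (ecdf y') + (1 / n + 1 / m) := by
  apply ciSup_le
  intro t
  have h1 := ecdf_diff_le hn x x' hx t
  have h2 := ecdf_diff_le hm y y' hy t
  have h3 : |ecdf x' t - ecdf y' t| ≤ dKS (ecdf x') (ecdf y') :=
    le_ciSup (dKS_bddAbove hn hm x' y') t
  have h4 : |ecdf x t - ecdf y t| - |ecdf x' t - ecdf y' t| ≤
      |(ecdf x t - ecdf y t) - (ecdf x' t - ecdf y' t)| := abs_sub_abs_le_abs_sub _ _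
  have h5 : (ecdf x t - ecdf y t) - (ecdf x' t - ecdf y' t)
      = (ecdf x t - ecdf x' t) - (ecdf y t - ecdf y' t) := by ring
  have h6 : |(ecdf x t - ecdf x' t) - (ecdf y t - ecdf y' t)| ≤
      |ecdf x t - ecdf x' t| + |ecdf y t - ecdf y' t| := abs_sub _ _
  rw [h5] at h4
  linarith

theorem twoSample_KS_sensitivity_max_metric {n m : ℕ} (hn : 1 ≤ n) (hm : 1 ≤ m)
    (x x' : Fin n → ℝ) (y y' : Fin m → ℝ)
    (hx : hammingDist x x' ≤ 1) (hy : hammingDist y y' ≤ 1) :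
    |dKS (ecdf x) (ecdf y) - dKS (ecdf x') (ecdf y')| ≤ 1 / n + 1 / m := by
  rw [abs_le]
  have h1 := dKS_le hn hm x x' y y' hx hy
  have h2 := dKS_le hn hm x' x y' y (by rwa [hammingDist_comm]) (by rwa [hammingDist_comm])
  constructor <;> linarith
end

section
/- Let n, m ≥ 1, let x, x' ∈ ℝⁿ with H(x,x') ≤ 1 and y, y' ∈ ℝᵐ with H(y,y') ≤ 1 (each sample changes in at most one coordinate). Then the two-sample Kuiper statistic satisfies |d_K(F̂_x, F̂_y) − d_K(F̂_{x'}, F̂_{y'})| ≤ 1/n + 1/m. -/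
open Filter

/-- Kuiper distance. -/
noncomputable def dK (F G : ℝ → ℝ) : ℝ :=
  (⨆ t : ℝ, (F t - G t)) + (⨆ s : ℝ, (G s - F s))

/-! A sample changed in one coordinate is coordinatewise comparable with the original, so the
two empirical cdfs are ordered and differ by at most `1/n`: one of the two suprema in their
Kuiper distance is `≤ 0` and the other `≤ 1/n`. The Kuiper distance satisfies the triangle
inequality on bounded functions, which turns this into the bound `1/n + 1/m` for the
two-sample statistic. -/

open Set

section Kuiper

lemma bddAbove_range_sub {ι : Type*} {F G : ι → ℝ} (hF : BddAbove (range F))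
    (hG : BddBelow (range G)) : BddAbove (range fun t => F t - G t) := by
  obtain ⟨a, ha⟩ := hF
  obtain ⟨b, hb⟩ := hG
  exact ⟨a - b, forall_mem_range.2 fun t =>
    sub_le_sub (ha (mem_range_self t)) (hb (mem_range_self t))⟩

lemma ciSup_sub_le_ciSup_sub_add_ciSup_sub {ι : Type*} [Nonempty ι] {F G H : ι → ℝ}
    (hFG : BddAbove (range fun t => F t - G t)) (hGH : BddAbove (range fun t => G t - H t)) :
    ⨆ t, (F t - H t) ≤ (⨆ t, (F t - G t)) + ⨆ t, (G t - H t) :=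
  ciSup_le fun t => by linarith [le_ciSup hFG t, le_ciSup hGH t]

variable {F G H F' G' : ℝ → ℝ}

lemma dK_comm (F G : ℝ → ℝ) : dK F G = dK G F := add_comm _ _

lemma dK_le_add (hF : Bornology.IsBounded (range F)) (hG : Bornology.IsBounded (range G))
    (hH : Bornology.IsBounded (range H)) : dK F H ≤ dK F G + dK G H := by
  have h₁ := ciSup_sub_le_ciSup_sub_add_ciSup_sub (bddAbove_range_sub hF.bddAbove hG.bddBelow)
    (bddAbove_range_sub hG.bddAbove hH.bddBelow)
  have h₂ := ciSup_sub_le_ciSup_sub_add_ciSup_sub (bddAbove_range_sub hH.bddAbove hG.bddBelow)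
    (bddAbove_range_sub hG.bddAbove hF.bddBelow)
  unfold dK
  linarith

lemma abs_dK_sub_dK_le (hF : Bornology.IsBounded (range F)) (hG : Bornology.IsBounded (range G))
    (hF' : Bornology.IsBounded (range F')) (hG' : Bornology.IsBounded (range G')) :
    |dK F G - dK F' G'| ≤ dK F F' + dK G G' := by
  have h₁ : dK F G ≤ dK F F' + dK F' G' + dK G' G :=
    (dK_le_add hF hG' hG).trans (add_le_add_left (dK_le_add hF hF' hG') _)
  have h₂ : dK F' G' ≤ dK F' F + dK F G + dK G G' :=
    (dK_le_add hF' hG hG').trans (add_le_add_left (dK_le_add hF' hF hG) _)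
  rw [dK_comm G' G] at h₁
  rw [dK_comm F' F] at h₂
  rw [abs_sub_le_iff]
  constructor <;> linarith

lemma dK_le_of_le_of_le_add {c : ℝ} (hGF : ∀ t, G t ≤ F t) (hFG : ∀ t, F t ≤ G t + c) :
    dK F G ≤ c := by
  have h₁ : ⨆ t, (F t - G t) ≤ c := ciSup_le fun t => by linarith [hFG t]
  have h₂ : ⨆ t, (G t - F t) ≤ 0 := ciSup_le fun t => by linarith [hGF t]
  unfold dK
  linarith

end Kuiper

section Ecdf

open scoped Finset

variable {n : ℕ}

lemma ecdf_mem_Icc (x : Fin n → ℝ) (t : ℝ) : ecdf x t ∈ Icc 0 1 := by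
  refine ⟨by unfold ecdf; positivity, div_le_one_of_le₀ ?_ n.cast_nonneg⟩
  exact_mod_cast (Finset.card_filter_le _ _).trans_eq (Finset.card_fin n)

lemma isBounded_range_ecdf (x : Fin n → ℝ) : Bornology.IsBounded (range (ecdf x)) :=
  Metric.isBounded_Icc (0 : ℝ) 1 |>.subset (range_subset_iff.2 (ecdf_mem_Icc x))

lemma ecdf_antitone : Antitone (ecdf : (Fin n → ℝ) → ℝ → ℝ) := by
  intro x y hxy t
  unfold ecdf
  gcongr with i
  exact hxy i

lemma ecdf_le_ecdf_add_hammingDist (x y : Fin n → ℝ) (t : ℝ) :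
    ecdf x t ≤ ecdf y t + hammingDist x y / n := by
  have hsub : ({i | x i ≤ t} : Finset (Fin n)) ⊆
      ({i | y i ≤ t} : Finset (Fin n)) ∪ ({i | x i ≠ y i} : Finset (Fin n)) := by
    intro i hi
    simp only [Finset.mem_union, Finset.mem_filter, Finset.mem_univ, true_and] at hi ⊢
    by_cases h : x i = y i
    · exact .inl (h ▸ hi)
    · exact .inr h
  have hcard : (#{i | x i ≤ t} : ℝ) ≤ #{i | y i ≤ t} + hammingDist x y := by
    exact_mod_cast (Finset.card_le_card hsub).trans (Finset.card_union_le _ _)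
  unfold ecdf
  rw [← add_div]
  gcongr

lemma le_or_le_of_hammingDist_le_one {ι α : Type*} [Fintype ι] [LinearOrder α] {x y : ι → α}
    (h : hammingDist x y ≤ 1) : x ≤ y ∨ y ≤ x := by
  classical
  by_contra! hxy
  obtain ⟨⟨i, hi⟩, ⟨j, hj⟩⟩ : (∃ i, y i < x i) ∧ ∃ j, x j < y j := by
    simpa [Pi.le_def] using hxy
  have hij : i ≠ j := by rintro rfl; exact lt_asymm hi hj
  have hsub : ({i, j} : Finset ι) ⊆ ({k | x k ≠ y k} : Finset ι) := by
    simp [Finset.insert_subset_iff, hi.ne', hj.ne]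
  have := (Finset.card_le_card hsub).trans h
  rw [Finset.card_pair hij] at this
  omega

lemma dK_ecdf_le_of_hammingDist_le_one {x y : Fin n → ℝ} (h : hammingDist x y ≤ 1) :
    dK (ecdf x) (ecdf y) ≤ 1 / n := by
  wlog hxy : x ≤ y generalizing x y
  · rw [dK_comm]
    exact this (hammingDist_comm x y ▸ h)
      ((le_or_le_of_hammingDist_le_one h).resolve_left hxy)
  refine dK_le_of_le_of_le_add (ecdf_antitone hxy) fun t => ?_
  have : (hammingDist x y : ℝ) / n ≤ 1 / n := by gcongr; exact_mod_cast h
  linarith [ecdf_le_ecdf_add_hammingDist x y t]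

end Ecdf

theorem twoSample_Kuiper_sensitivity_max_metric_general {n m : ℕ}
    (x x' : Fin n → ℝ) (y y' : Fin m → ℝ)
    (hx : hammingDist x x' ≤ 1) (hy : hammingDist y y' ≤ 1) :
    |dK (ecdf x) (ecdf y) - dK (ecdf x') (ecdf y')| ≤ 1 / n + 1 / m :=
  (abs_dK_sub_dK_le (isBounded_range_ecdf x) (isBounded_range_ecdf y)
    (isBounded_range_ecdf x') (isBounded_range_ecdf y')).trans
    (add_le_add (dK_ecdf_le_of_hammingDist_le_one hx) (dK_ecdf_le_of_hammingDist_le_one hy))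

theorem twoSample_Kuiper_sensitivity_max_metric {n m : ℕ} (hn : 1 ≤ n) (hm : 1 ≤ m)
    (x x' : Fin n → ℝ) (y y' : Fin m → ℝ)
    (hx : hammingDist x x' ≤ 1) (hy : hammingDist y y' ≤ 1) :
    |dK (ecdf x) (ecdf y) - dK (ecdf x') (ecdf y')| ≤ 1 / n + 1 / m :=
  twoSample_Kuiper_sensitivity_max_metric_general x x' y y' hx hy
end
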